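/- Let n ≥ 3 and let λ = (λ_1, …, λ_r) be a partition of n such that either r = 1 (i.e. λ = (n)) or λ_1 ≥ λ_2 + 2. Let λ' = (λ_1−2, λ_2, …, λ_r) be the partition of n−2 obtained from λ by removing the last two cells of the first row. Then |η_λ| > |η_{λ'}|. -/

import Mathlib

/-- Derangement numbers: `D 0 = 1`, `D (m+1) = (m+1) * D m + (-1)^(m+1)`. -/
def derange : ℕ → ℤ
  | 0 => 1
  | n + 1 => (n + 1 : ℤ) * derange n + (-1) ^ (n + 1)

/-- Subtract one from every part and discard the parts that become zero
(deleting the first column of the Ferrers diagram). -/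
def strip (l : List ℕ) : List ℕ := (l.map (· - 1)).filter (fun x => 0 < x)

lemma strip_measure (l : List ℕ) : (strip l).sum + (strip l).length ≤ l.sum := by
  induction l with
  | nil => simp [strip]
  | cons x t ih =>
      simp only [strip, List.map_cons, List.filter_cons] at ih ⊢
      by_cases hx : 0 < x - 1 <;> simp [hx] <;> omega

/-- The eigenvalues of the derangement graph, defined by Renteln's recurrence:
`η ∅ = 1` and `η λ = (-1)^h (η (λ-ĥ) + (-1)^{λ₁} h η (λ-ĉ))`, where
`h = λ₁ + r - 1` is the hook size, `λ-ĥ = strip (tail λ)` removes the hook,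
and `λ-ĉ = strip λ` removes the first column. -/
def eta : List ℕ → ℤ
  | [] => 1
  | a :: t =>
      (-1) ^ (a + t.length) *
        (eta (strip t) + (-1) ^ a * ((a : ℤ) + t.length) * eta (strip (a :: t)))
  termination_by l => l.sum + l.length
  decreasing_by
  · have h1 := strip_measure t
    simp only [List.sum_cons, List.length_cons]
    omega
  · have h1 := strip_measure (a :: t)
    simp only [List.sum_cons, List.length_cons] at h1 ⊢
    omega

/-- `l` is (the list of parts of) a partition of `n`: weakly decreasing,
all parts positive, summing to `n`. -/
def IsPartition (n : ℕ) (l : List ℕ) : Prop :=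
  l.Pairwise (· ≥ ·) ∧ (∀ x ∈ l, 0 < x) ∧ l.sum = n

/-- The hook partition `(a, 1^(n-a))` of `n`. -/
def hookP (n a : ℕ) : List ℕ := a :: List.replicate (n - a) 1

/-! Write `λ = x :: v` with `v₁ + 2 ≤ x` and induct on `x`. Deleting the first column gives
`(x - 1) :: strip v`, which again has a gap of two, and Renteln's recurrence bounds `|η λ|` from
below by `(x + r - 1) |η ((x - 1) :: strip v)| - |η (strip v)|`, while the same recurrence bounds
`|η ((x - 2) :: v)|` and `|η u|` for suffixes `u` of `v` from above in terms of the previous level.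
The induction bottoms out at `v = (1, …, 1)`, where `η (x) = D_x` and `|η (1^m)| = m - 1` give
the bounds directly. -/

open List

lemma eta_nil : eta [] = 1 := by rw [eta]

lemma eta_cons (a : ℕ) (t : List ℕ) : eta (a :: t) =
    (-1) ^ (a + t.length) *
      (eta (strip t) + (-1) ^ a * ((a : ℤ) + t.length) * eta (strip (a :: t))) := by
  rw [eta]

lemma strip_nil : strip [] = [] := rfl

lemma strip_cons_of_two_le {a : ℕ} (t : List ℕ) (ha : 2 ≤ a) :
    strip (a :: t) = (a - 1) :: strip t := by
  simp [strip, show 0 < a - 1 by omega]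

lemma strip_eq_nil {l : List ℕ} (h : ∀ y ∈ l, y ≤ 1) : strip l = [] := by
  simpa [strip] using fun y hy => Nat.sub_eq_zero_of_le (h y hy)

lemma pos_of_mem_strip {l : List ℕ} {y : ℕ} (hy : y ∈ strip l) : 0 < y := by
  simp only [strip, mem_filter, decide_eq_true_eq] at hy
  exact hy.2

lemma List.Pairwise.strip {l : List ℕ} (h : l.Pairwise (· ≥ ·)) :
    (strip l).Pairwise (· ≥ ·) :=
  (pairwise_map.2 (h.imp fun hab => Nat.sub_le_sub_right hab 1)).filter _

lemma List.IsSuffix.strip {u v : List ℕ} (h : u <:+ v) : strip u <:+ strip v :=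
  (h.map _).filter _

lemma abs_eta_cons (a : ℕ) (t : List ℕ) : |eta (a :: t)| =
    |eta (strip t) + (-1) ^ a * ((a : ℤ) + t.length) * eta (strip (a :: t))| := by
  rw [eta_cons, abs_mul, abs_neg_one_pow, one_mul]

lemma abs_neg_one_pow_mul_eq (a : ℕ) (t : List ℕ) (e : ℤ) :
    |(-1) ^ a * ((a : ℤ) + t.length) * e| = ((a : ℤ) + t.length) * |e| := by
  rw [abs_mul, abs_mul, abs_neg_one_pow, one_mul, abs_of_nonneg (by positivity)]

lemma abs_eta_cons_le (a : ℕ) (t : List ℕ) :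
    |eta (a :: t)| ≤ ((a : ℤ) + t.length) * |eta (strip (a :: t))| + |eta (strip t)| := by
  rw [abs_eta_cons, ← abs_neg_one_pow_mul_eq, add_comm _ |eta (strip t)|]
  exact abs_add_le _ _

lemma le_abs_eta_cons (a : ℕ) (t : List ℕ) :
    ((a : ℤ) + t.length) * |eta (strip (a :: t))| ≤ |eta (a :: t)| + |eta (strip t)| := by
  rw [abs_eta_cons, ← abs_neg_one_pow_mul_eq, add_comm (eta (strip t))]
  linarith [abs_sub_abs_le_abs_add ((-1) ^ a * ((a : ℤ) + t.length) * eta (strip (a :: t)))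
    (eta (strip t))]

lemma eta_singleton (n : ℕ) : eta [n] = derange n := by
  induction n with
  | zero => simp [eta_cons, strip, eta, derange]
  | succ n ih =>
    rcases Nat.eq_zero_or_pos n with rfl | hn
    · simp [eta_cons, strip_eq_nil, eta, derange]
    rw [eta_cons, strip_cons_of_two_le _ (by omega), Nat.add_sub_cancel, strip_nil, ih, derange]
    simp only [eta, length_nil, Nat.cast_add, Nat.cast_one, add_zero, CharP.cast_eq_zero]
    rw [mul_add, ← mul_assoc, ← mul_assoc, ← pow_add, ← two_mul, pow_mul]
    ring

lemma abs_eta_replicate_one (m : ℕ) : |eta (replicate (m + 1) 1)| = m := by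
  rw [replicate_succ, abs_eta_cons, strip_eq_nil (by simp), strip_eq_nil (by simp +contextual)]
  simp [eta]

lemma one_le_derange {n : ℕ} (hn : 2 ≤ n) : 1 ≤ derange n := by
  induction n, hn using Nat.le_induction with
  | base => decide
  | succ n hn ih =>
    rw [derange]
    rcases neg_one_pow_eq_or ℤ (n + 1) with h | h <;> rw [h] <;> nlinarith

lemma derange_nonneg (n : ℕ) : 0 ≤ derange n := by
  rcases lt_or_ge n 2 with hn | hn
  · interval_cases n <;> decide
  · linarith [one_le_derange hn]

lemma derange_add_one_le {n : ℕ} (hn : 1 ≤ n) : derange n + 1 ≤ derange (n + 1) := by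
  rcases hn.eq_or_lt with rfl | hn
  · decide
  rw [derange]
  have := one_le_derange hn
  rcases neg_one_pow_eq_or ℤ (n + 1) with h | h <;> rw [h] <;> nlinarith

lemma derange_add_two_le {n : ℕ} (hn : 1 ≤ n) : derange n + 2 ≤ derange (n + 2) := by
  linarith [derange_add_one_le hn, derange_add_one_le (by omega : 1 ≤ n + 1)]

/-- The first conjunct strengthens the induction hypothesis: the recurrence for `η (x :: v)`
involves `η` of `strip` of suffixes of `v`, which must be controlled one level down. -/
def FirstRowBounds (x : ℕ) (v : List ℕ) : Prop :=
  (∀ u, u <:+ v → |eta u| + |eta (strip u)| ≤ |eta (x :: v)|) ∧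
    |eta ((x - 2) :: v)| + 2 ≤ |eta (x :: v)|

lemma firstRowBounds_replicate_one {x : ℕ} (hx : 3 ≤ x) (m : ℕ) :
    FirstRowBounds x (replicate m 1) := by
  have hstrip : ∀ u, u <:+ replicate m 1 → strip u = [] := fun u hu =>
    strip_eq_nil fun y hy => (eq_of_mem_replicate (hu.subset hy)).le
  have hlow : ((x : ℤ) + m) * derange (x - 1) - 1 ≤ |eta (x :: replicate m 1)| := by
    have := le_abs_eta_cons x (replicate m 1)
    rwa [strip_cons_of_two_le _ (by omega), hstrip _ (suffix_refl _), eta_singleton,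
      abs_of_nonneg (derange_nonneg _), length_replicate, eta_nil, abs_one,
      ← sub_le_iff_le_add] at this
  have hD := one_le_derange (show 2 ≤ x - 1 by omega)
  have hx' : (3 : ℤ) ≤ x := by exact_mod_cast hx
  have hm : (m : ℤ) + 2 ≤ |eta (x :: replicate m 1)| := by nlinarith
  constructor
  · intro u hu
    obtain ⟨k, rfl⟩ : ∃ k, u = replicate k 1 :=
      ⟨_, eq_replicate_iff.2 ⟨rfl, fun _ hb => eq_of_mem_replicate (hu.subset hb)⟩⟩
    have hk : (k : ℤ) ≤ m := by simpa using hu.length_le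
    have hu' : |eta (replicate k 1)| ≤ k + 1 := by
      rcases k with _ | k
      · simp [eta_nil]
      · rw [abs_eta_replicate_one]; push_cast; linarith
    rw [hstrip _ hu, eta_nil, abs_one]
    linarith
  · rcases hx.eq_or_lt with rfl | hx
    · rw [show 3 - 2 = 1 from rfl, ← replicate_succ, abs_eta_replicate_one]
      linarith
    · have hup := abs_eta_cons_le (x - 2) (replicate m 1)
      rw [strip_cons_of_two_le _ (by omega), hstrip _ (suffix_refl _), eta_singleton,
        abs_of_nonneg (derange_nonneg _), length_replicate, eta_nil, abs_one,
        show x - 2 - 1 = x - 3 by omega, Nat.cast_sub (by omega)] at hup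
      have hstep := derange_add_two_le (show 1 ≤ x - 3 by omega)
      rw [show x - 3 + 2 = x - 1 by omega] at hstep
      have := derange_nonneg (x - 3)
      nlinarith

lemma FirstRowBounds.cons {x c : ℕ} {ρ : List ℕ} (hc : 2 ≤ c) (hcx : c + 1 ≤ x)
    (hρ : ∀ y ∈ ρ, y ≤ c) (ih : FirstRowBounds x (strip (c :: ρ))) :
    FirstRowBounds (x + 1) (c :: ρ) := by
  set v := c :: ρ
  set W := strip v
  obtain ⟨ihA, ihB⟩ := ih
  set A' := |eta (x :: W)|
  have hsuf : ∀ w, w <:+ W → |eta w| ≤ A' := fun w hw => by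
    linarith [ihA w hw, abs_nonneg (eta (strip w))]
  have hA' : 2 ≤ A' := by simpa [eta_nil, strip_nil] using ihA [] nil_suffix
  have hW := hsuf W (suffix_refl _)
  have hlow : ((x : ℤ) + 1 + v.length) * A' ≤ |eta ((x + 1) :: v)| + |eta W| := by
    have := le_abs_eta_cons (x + 1) v
    rwa [strip_cons_of_two_le _ (by omega), Nat.add_sub_cancel, Nat.cast_succ] at this
  have hv : (1 : ℤ) ≤ v.length := by simp [v]
  constructor
  · intro u hu
    rcases u with _ | ⟨d, s⟩
    · simp only [eta_nil, strip_nil, abs_one]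
      nlinarith
    have hd : (d : ℤ) + s.length + 2 ≤ x + v.length := by
      have hdc : d ≤ c := by
        rcases mem_cons.1 (hu.subset (mem_cons_self ..)) with h | h
        · exact h.le
        · exact hρ d h
      have hs : s.length + 1 ≤ v.length := by simpa using hu.length_le
      omega
    have h1 := hsuf _ hu.strip
    have h2 := hsuf _ ((suffix_cons d s).trans hu).strip
    have hup := abs_eta_cons_le d s
    have e1 := mul_le_mul_of_nonneg_left h1 (by positivity : (0 : ℤ) ≤ d + s.length)
    have e2 := mul_le_mul_of_nonneg_right hd (by linarith : (0 : ℤ) ≤ A')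
    linarith
  · have hup := abs_eta_cons_le (x - 1) v
    rw [strip_cons_of_two_le _ (by omega), show x - 1 - 1 = x - 2 by omega,
      Nat.cast_sub (by omega), Nat.cast_one] at hup
    rw [show x + 1 - 2 = x - 1 by omega]
    have e := mul_le_mul_of_nonneg_left (le_sub_right_of_add_le ihB)
      (by linarith : (0 : ℤ) ≤ x - 1 + v.length)
    linarith

theorem firstRowBounds_of_pairwise {x : ℕ} (hx : 3 ≤ x) {v : List ℕ} (hs : v.Pairwise (· ≥ ·))
    (hp : ∀ y ∈ v, 0 < y) (hgap : v.headI + 2 ≤ x) : FirstRowBounds x v := by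
  induction x using Nat.strong_induction_on generalizing v with
  | _ x ih =>
  rcases v with _ | ⟨c, ρ⟩
  · exact firstRowBounds_replicate_one hx 0
  have hρ : ∀ y ∈ ρ, y ≤ c := fun y hy => pairwise_cons.1 hs |>.1 y hy
  by_cases hc : c ≤ 1
  · have hones : c :: ρ = replicate (ρ.length + 1) 1 := eq_replicate_iff.2 ⟨rfl, fun y hy => by
      have := hp y hy
      rcases mem_cons.1 hy with rfl | hy <;> [omega; linarith [hρ y hy]]⟩
    exact hones ▸ firstRowBounds_replicate_one hx _
  obtain ⟨x, rfl⟩ : ∃ x', x = x' + 1 := ⟨x - 1, by omega⟩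
  simp only [headI_cons] at hgap
  refine FirstRowBounds.cons (by omega) (by omega) hρ (ih x (by omega) (by omega) hs.strip
    (fun _ => pos_of_mem_strip) ?_)
  rw [strip_cons_of_two_le _ (by omega), headI_cons]
  omega

/-- For `n ≥ 3` and a partition `λ ⊢ n` with one part or `λ₁ ≥ λ₂ + 2`,
removing two cells from the first row strictly decreases `|η|`. -/
theorem eta_abs_remove_two_cells (n : ℕ) (hn : 3 ≤ n)
    (l : List ℕ) (hl : IsPartition n l)
    (hcond : l.length = 1 ∨ l.tail.headI + 2 ≤ l.headI) :
    |eta ((l.headI - 2) :: l.tail)| < |eta l| := by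
  obtain ⟨hs, hp, rfl⟩ := hl
  rcases l with _ | ⟨x, t⟩
  · simp at hn
  simp only [headI_cons, tail_cons] at hcond ⊢
  have hgap : t.headI + 2 ≤ x := by
    rcases hcond with hlen | hgap
    · obtain rfl : t = [] := by simpa using hlen
      simp at hn ⊢
      omega
    · exact hgap
  have hx : 3 ≤ x := by
    rcases t with _ | ⟨c, ρ⟩
    · simpa using hn
    · simp only [headI_cons] at hgap
      linarith [hp c (by simp)]
  have hB := (firstRowBounds_of_pairwise hx hs.of_cons
    (fun y hy => hp y (mem_cons_of_mem x hy)) hgap).2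
  linarith
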